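/- arXiv:math/0512107 — 3 statements merged into one kernel-verified Lean document; each statement's English description precedes it below -/
import Mathlib

section
/- For every natural number n ≥ 1, the n-th power of U_1 decomposes into Chebyshev polynomials of the second kind as (U_1(X))^n = ∑_{i=0}^{⌊n/2⌋} (C(n,i) − C(n,i−1)) · U_{n−2i}(X) in ℤ[X], where C(n,i) denotes the binomial coefficient and C(n,−1) = 0. (This is the decomposition of the n-th tensor power of the two-dimensional irreducible representation of SU(2), expressed in characters: χ_{1/2}^n = ∑ [C(n,i) − C(n,i−1)] χ_{n/2−i}.) -/
/-!
Since `U₁ * U m = U (m + 1) + U (m - 1)`, multiplication by `U₁` acts on the `U m` as `x + x⁻¹`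
acts on the monomials `x ^ m`, so Pascal's rule gives `U₁ ^ n = ∑_{i + j = n} C(n, i) U (j - i)`.
The terms with `i > n / 2` fold back onto the lower half through `U (-m - 2) = -U m`, which turns
the coefficient `C(n, i)` into `-C(n, i - 1)`.
-/

open Polynomial Finset

namespace Polynomial.Chebyshev

variable {R : Type*} [CommRing R]

theorem U_one_mul_U (m : ℤ) : U R 1 * U R m = U R (m + 1) + U R (m - 1) := by
  rw [U_one, U_sub_one]
  ring

theorem U_one_pow_eq_sum_antidiagonal (n : ℕ) :
    U R 1 ^ n = ∑ ij ∈ antidiagonal n, (n.choose ij.1 : R[X]) * U R (ij.2 - ij.1) := by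
  induction n with
  | zero => simp
  | succ n ih =>
    rw [sum_antidiagonal_choose_succ_mul (fun i j => U R ((j : ℤ) - i)), pow_succ', ih,
      mul_sum, ← sum_add_distrib]
    refine sum_congr rfl fun ij hij => ?_
    rw [HasAntidiagonal.mem_antidiagonal] at hij
    rw [Nat.choose_symm_of_eq_add hij.symm, mul_left_comm, U_one_mul_U]
    push_cast
    ring_nf

theorem U_one_pow_eq_sum_range (n : ℕ) :
    U R 1 ^ n = ∑ i ∈ range (n + 1), (n.choose i : R[X]) * U R (n - 2 * i) := by
  rw [U_one_pow_eq_sum_antidiagonal, Nat.sum_antidiagonal_eq_sum_range_succ_mk]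
  refine sum_congr rfl fun i hi => ?_
  rw [Nat.cast_sub (mem_range_succ_iff.mp hi)]
  ring_nf

theorem sum_range_choose_mul_U_upper_half (n : ℕ) :
    ∑ k ∈ range (n - n / 2), (n.choose (n / 2 + 1 + k) : R[X]) * U R (n - 2 * (n / 2 + 1 + k : ℕ)) =
      -∑ k ∈ range (n / 2), (n.choose k : R[X]) * U R (n - 2 - 2 * k) := by
  rw [← sum_range_reflect, ← sum_neg_distrib]
  calc _ = ∑ k ∈ range (n - n / 2), -((n.choose k : R[X]) * U R (n - 2 - 2 * k)) := by
        refine sum_congr rfl fun k hk => ?_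
        rw [mem_range] at hk
        rw [show n / 2 + 1 + (n - n / 2 - 1 - k) = n - k by omega, Nat.choose_symm (by omega),
          Nat.cast_sub (by omega), show (n : ℤ) - 2 * (n - k) = -(n - 2 - 2 * k) - 2 by ring,
          U_neg_sub_two, mul_neg]
    _ = _ := by
        -- for odd `n` the one extra term is the middle one, which carries `U (-1) = 0`
        refine (sum_subset (range_subset_range.mpr (by omega)) fun k hk hk' => ?_).symm
        rw [mem_range] at hk hk'
        rw [show (n : ℤ) - 2 - 2 * k = -1 by omega, U_neg_one, mul_zero, neg_zero]

theorem sum_range_choose_mul_U_eq_sum_range_half (n : ℕ) :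
    ∑ i ∈ range (n + 1), (n.choose i : R[X]) * U R (n - 2 * i) =
      ∑ i ∈ range (n / 2 + 1),
        Polynomial.C ((n.choose i : R) - if i = 0 then 0 else (n.choose (i - 1) : R)) *
          U R (n - 2 * i) := by
  have lower_shift : ∑ i ∈ range (n / 2 + 1),
      Polynomial.C (if i = 0 then 0 else (n.choose (i - 1) : R)) * U R (n - 2 * i) =
        ∑ k ∈ range (n / 2), (n.choose k : R[X]) * U R (n - 2 - 2 * k) := by
    rw [sum_range_succ']
    simp only [Nat.add_one_ne_zero, if_false, if_true, Nat.add_sub_cancel, map_natCast, map_zero,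
      zero_mul, add_zero]
    refine sum_congr rfl fun k _ => ?_
    congr 2
    push_cast
    ring
  rw [show n + 1 = n / 2 + 1 + (n - n / 2) by omega, sum_range_add,
    sum_range_choose_mul_U_upper_half, ← lower_shift, ← sub_eq_add_neg, ← sum_sub_distrib]
  refine sum_congr rfl fun i _ => ?_
  rw [map_sub, map_natCast, sub_mul]

end Polynomial.Chebyshev

theorem chebyshev_U_one_pow_general (n : ℕ) :
    (Polynomial.Chebyshev.U ℤ 1) ^ n =
      ∑ i ∈ Finset.range (n / 2 + 1),
        Polynomial.C ((n.choose i : ℤ) - if i = 0 then 0 else (n.choose (i - 1) : ℤ)) *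
          Polynomial.Chebyshev.U ℤ ((n : ℤ) - 2 * (i : ℤ)) :=
  (Polynomial.Chebyshev.U_one_pow_eq_sum_range n).trans
    (Polynomial.Chebyshev.sum_range_choose_mul_U_eq_sum_range_half n)

/-- Decomposition of the `n`-th tensor power of the two-dimensional irreducible
representation of `SU(2)`, in terms of Chebyshev polynomials of the second kind:
`(U_1)^n = ∑_{i=0}^{⌊n/2⌋} (C(n,i) - C(n,i-1)) U_{n-2i}`, with the convention
`C(n,-1) = 0`. -/
theorem chebyshev_U_one_pow (n : ℕ) (hn : 1 ≤ n) :
    (Polynomial.Chebyshev.U ℤ 1) ^ n =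
      ∑ i ∈ Finset.range (n / 2 + 1),
        Polynomial.C ((n.choose i : ℤ) - if i = 0 then 0 else (n.choose (i - 1) : ℤ)) *
          Polynomial.Chebyshev.U ℤ ((n : ℤ) - 2 * (i : ℤ)) :=
  chebyshev_U_one_pow_general n
end

section
/- Let G be a finite group and let χ, ψ, η, η′ be irreducible complex characters of G. If both η and η′ occur as constituents of the pointwise product χ·ψ, then η and η′ have the same central character: η(z)·η′(1) = η′(z)·η(1) for every z in the center Z(G). (This shows that the product ⟨χ⟩·⟨ψ⟩ = ⟨η⟩ on the chain group 𝓒(G), defined by picking any irreducible constituent η of χ·ψ, is well defined.) -/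
/-!
By Schur's lemma a central element `z` acts on an irreducible representation as a scalar, so
`θ (z * g) = c_θ * θ g` for every irreducible character `θ`; hence translation by `z` scales
`χ · ψ` by `c_χ c_ψ`. Since `⟨φ, θ⟩` is invariant under translating both arguments, it gets
multiplied by `c_χ c_ψ conj c_θ`, which must therefore be `1` when `θ` is a constituent of
`χ · ψ`. This determines `c_θ`, so `c_η = c_η'`.
-/

open CategoryTheory Finset

/-- The inner product of class functions on a finite group:
`⟨φ, η⟩ = (1/|G|) ∑ g, φ g * conj (η g)`, giving the multiplicity of an irreducible
character `η` in `φ`. -/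
noncomputable def charMult (G : Type) [Group G] [Fintype G] (φ η : G → ℂ) : ℂ :=
  (Fintype.card G : ℂ)⁻¹ * ∑ g : G, φ g * (starRingEnd ℂ) (η g)

/-- `χ` is an irreducible complex character of `G`: the character of some irreducible
finite-dimensional complex representation of `G`. -/
def IsIrrChar (G : Type) [Group G] (χ : G → ℂ) : Prop :=
  ∃ V : FDRep ℂ G, Simple V ∧ χ = V.character

namespace FDRep

variable {k G : Type} [Field k] [IsAlgClosed k] [Group G]

theorem exists_ρ_eq_smul_one_of_mem_center (V : FDRep k G) [Simple V] {z : G}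
    (hz : z ∈ Subgroup.center G) : ∃ c : k, V.ρ z = c • 1 := by
  let f : V ⟶ V := ⟨FGModuleCat.ofHom (V.ρ z), fun g => by
    ext v
    change (V.ρ z * V.ρ g) v = (V.ρ g * V.ρ z) v
    rw [← map_mul, ← map_mul, Subgroup.mem_center_iff.mp hz g]⟩
  obtain ⟨c, hc⟩ := endomorphism_simple_eq_smul_id k f
  exact ⟨c, (congrArg (fun f : V ⟶ V => f.hom.hom.hom) hc).symm⟩

theorem exists_character_mul_left_of_mem_center (V : FDRep k G) [Simple V] {z : G}
    (hz : z ∈ Subgroup.center G) : ∃ c : k, ∀ g, V.character (z * g) = c * V.character g := by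
  obtain ⟨c, hc⟩ := V.exists_ρ_eq_smul_one_of_mem_center hz
  refine ⟨c, fun g => ?_⟩
  simp only [FDRep.character, map_mul, hc, smul_mul_assoc, one_mul, map_smul, smul_eq_mul]

end FDRep

theorem IsIrrChar.exists_mul_left_of_mem_center {G : Type} [Group G] {χ : G → ℂ}
    (hχ : IsIrrChar G χ) {z : G} (hz : z ∈ Subgroup.center G) :
    ∃ c : ℂ, ∀ g, χ (z * g) = c * χ g := by
  obtain ⟨V, hV, rfl⟩ := hχ
  exact V.exists_character_mul_left_of_mem_center hz

section charMult

variable {G : Type} [Group G] [Fintype G]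

theorem charMult_comp_mul_left (φ θ : G → ℂ) (z : G) :
    charMult G (fun g => φ (z * g)) (fun g => θ (z * g)) = charMult G φ θ := by
  unfold charMult
  congr 1
  exact Fintype.sum_equiv (Equiv.mulLeft z) _ _ fun _ => rfl

theorem mul_conj_eq_one_of_charMult_ne_zero {φ θ : G → ℂ} {z : G} {a e : ℂ}
    (hφ : ∀ g, φ (z * g) = a * φ g) (hθ : ∀ g, θ (z * g) = e * θ g)
    (h : charMult G φ θ ≠ 0) : a * starRingEnd ℂ e = 1 := by
  have hscale : charMult G φ θ = a * starRingEnd ℂ e * charMult G φ θ :=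
    calc charMult G φ θ = charMult G (fun g => φ (z * g)) (fun g => θ (z * g)) :=
          (charMult_comp_mul_left φ θ z).symm
      _ = a * starRingEnd ℂ e * charMult G φ θ := by
          simp only [charMult, hφ, hθ, map_mul, mul_sum]
          exact sum_congr rfl fun _ _ => by ring
  exact (mul_eq_right₀ h).mp hscale.symm

end charMult

/-- If two irreducible characters `η` and `η'` both occur as constituents of the
pointwise product `χ · ψ` of irreducible characters, then `η` and `η'` have the same
central character.  Hence the product on the chain group `𝓒(G)` is well defined. -/
theorem constituents_of_prod_same_central_character (G : Type) [Group G] [Fintype G]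
    (χ ψ η η' : G → ℂ) (hχ : IsIrrChar G χ) (hψ : IsIrrChar G ψ)
    (hη : IsIrrChar G η) (hη' : IsIrrChar G η')
    (h1 : charMult G (fun g => χ g * ψ g) η ≠ 0)
    (h2 : charMult G (fun g => χ g * ψ g) η' ≠ 0) :
    ∀ z ∈ Subgroup.center G, η z * η' 1 = η' z * η 1 := by
  intro z hz
  obtain ⟨a, ha⟩ := hχ.exists_mul_left_of_mem_center hz
  obtain ⟨b, hb⟩ := hψ.exists_mul_left_of_mem_center hz
  obtain ⟨c, hc⟩ := hη.exists_mul_left_of_mem_center hz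
  obtain ⟨d, hd⟩ := hη'.exists_mul_left_of_mem_center hz
  have hprod : ∀ g, χ (z * g) * ψ (z * g) = a * b * (χ g * ψ g) := fun g => by
    rw [ha, hb]; ring
  have hc₁ := mul_conj_eq_one_of_charMult_ne_zero hprod hc h1
  have hd₁ := mul_conj_eq_one_of_charMult_ne_zero hprod hd h2
  have hcd : c = d := (starRingEnd ℂ).injective <|
    mul_left_cancel₀ (left_ne_zero_of_mul_eq_one hc₁) (hc₁.trans hd₁.symm)
  have hηz : η z = c * η 1 := by simpa using hc 1
  have hη'z : η' z = d * η' 1 := by simpa using hd 1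
  rw [hηz, hη'z, hcd]
  ring
end

section
/- Let G be a finite group. Then every one-dimensional unitary character of the center Z(G) (i.e., every group homomorphism from Z(G) to the complex units) arises as the central character of some irreducible finite-dimensional complex representation of G: for every homomorphism ω : Z(G) → ℂˣ there exists an irreducible complex character χ of G with χ(z) = ω(z)·χ(1) for all z ∈ Z(G). (This is the surjectivity part of the isomorphism between the chain group 𝓒(G) and the dual of the center.) -/
/-!
The vectors of the left regular representation `k[G]` on which every central `z` acts by the
scalar `ω z` form a subrepresentation, which is nonzero because it contains
`∑_{z ∈ Z(G)} ω(z)⁻¹ z`. A minimal nonzero subrepresentation of it is irreducible, `Z(G)` acts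
on it through `ω`, and hence its character satisfies `χ z = tr (ω z • 1) = ω z * χ 1`.
-/

open CategoryTheory

universe u

namespace Subrepresentation

section Semiring

variable {k G V : Type u} [Semiring k] [Monoid G] [AddCommMonoid V] [Module k V]
  {ρ : Representation k G V}

theorem toSubmodule_strictMono :
    StrictMono (toSubmodule : Subrepresentation ρ → Submodule k V) :=
  fun _ _ h => h

instance [IsArtinian k V] : IsAtomic (Subrepresentation ρ) :=
  have := toSubmodule_strictMono (ρ := ρ).wellFoundedLT
  isAtomic_of_orderBot_wellFounded_lt wellFounded_lt

def orderIsoIic (σ : Subrepresentation ρ) :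
    Subrepresentation σ.toRepresentation ≃o Set.Iic σ where
  toFun τ := ⟨⟨τ.toSubmodule.map σ.toSubmodule.subtype, by
      rintro g _ ⟨v, hv, rfl⟩
      exact ⟨_, τ.apply_mem_toSubmodule g hv, rfl⟩⟩, by
    rintro _ ⟨v, -, rfl⟩
    exact v.2⟩
  invFun τ := ⟨τ.1.toSubmodule.comap σ.toSubmodule.subtype, fun g _ hv =>
    τ.1.apply_mem_toSubmodule g hv⟩
  left_inv τ := by
    ext1
    exact Submodule.comap_map_eq_of_injective σ.toSubmodule.injective_subtype _
  right_inv τ := by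
    ext1; ext1
    exact (Submodule.map_comap_subtype _ _).trans (inf_eq_right.mpr τ.2)
  map_rel_iff' := Submodule.map_le_map_iff_of_injective σ.toSubmodule.injective_subtype _ _

end Semiring

theorem isIrreducible_toRepresentation {k G V : Type u} [Field k] [Monoid G] [AddCommGroup V]
    [Module k V] {ρ : Representation k G V} {σ : Subrepresentation ρ} (hσ : IsAtom σ) :
    σ.toRepresentation.IsIrreducible :=
  have := Set.isSimpleOrder_Iic_iff_isAtom.mpr hσ
  σ.orderIsoIic.isSimpleOrder

end Subrepresentation

namespace Representation

variable {k G V : Type u} [CommRing k] [Group G] [AddCommGroup V] [Module k V]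

def centralIsotypicComponent (ρ : Representation k G V) (ω : Subgroup.center G →* kˣ) :
    Subrepresentation ρ where
  toSubmodule := ⨅ z : Subgroup.center G, Module.End.eigenspace (ρ z) (ω z : k)
  apply_mem_toSubmodule g v hv := by
    simp only [Submodule.mem_iInf, Module.End.mem_eigenspace_iff] at hv ⊢
    intro z
    rw [← Module.End.mul_apply, ← map_mul, ← Subgroup.mem_center_iff.mp z.2 g, map_mul,
      Module.End.mul_apply, hv z, map_smul]

theorem mem_centralIsotypicComponent_iff {ρ : Representation k G V}
    {ω : Subgroup.center G →* kˣ} {v : V} :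
    v ∈ ρ.centralIsotypicComponent ω ↔ ∀ z : Subgroup.center G, ρ z v = (ω z : k) • v := by
  simp only [← Module.End.mem_eigenspace_iff]
  exact Submodule.mem_iInf _

open scoped IsMulCommutative in
theorem centralIsotypicComponent_ofMulAction_ne_bot [Finite G] [Nontrivial k]
    (ω : Subgroup.center G →* kˣ) : (ofMulAction k G G).centralIsotypicComponent ω ≠ ⊥ := by
  have := Fintype.ofFinite (Subgroup.center G)
  set f : MonoidAlgebra k G := ∑ z : Subgroup.center G, MonoidAlgebra.single (z : G) (ω z⁻¹ : k)
  have hf : ∀ w : Subgroup.center G, ofMulAction k G G w f = (ω w : k) • f := by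
    intro w
    simp only [f, map_sum, ofMulAction_single, Finset.smul_sum, MonoidAlgebra.smul_single,
      smul_eq_mul]
    refine Fintype.sum_equiv (Equiv.mulLeft w) _ _ fun z => ?_
    simp [← Units.val_mul, ← map_mul, mul_comm z⁻¹]
  have hf_coeff_one : f.coeff 1 = 1 := by
    classical
    rw [MonoidAlgebra.coeff_sum, Finsupp.finsetSum_apply, Finset.sum_eq_single 1]
    · simp
    · intro z _ hz
      rw [MonoidAlgebra.coeff_single, Finsupp.single_apply, if_neg (by simpa using hz)]
    · simp
  intro h
  have hf_mem := mem_centralIsotypicComponent_iff.mpr hf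
  rw [h] at hf_mem
  have : f = 0 := (Submodule.mem_bot k).mp hf_mem
  simp [this] at hf_coeff_one

end Representation

namespace FDRep

theorem simple_of_isIrreducible {k G V : Type u} [Field k] [Monoid G] [AddCommGroup V]
    [Module k V] [FiniteDimensional k V] (ρ : Representation k G V) [ρ.IsIrreducible] :
    Simple (FDRep.of ρ) :=
  let F := forget₂ (FDRep k G) (Rep k G) ⋙ Rep.toModuleMonoidAlgebra
  -- `F.obj (FDRep.of ρ)` is `ModuleCat.of k[G] ρ.asModule` by definition.
  have : Simple (F.obj (FDRep.of ρ)) :=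
    simple_iff_isSimpleModule.mpr (ρ.irreducible_iff_isSimpleModule_asModule.mp ‹_›)
  F.simple_of_simple_obj (FDRep.of ρ)

theorem character_eq_mul_character_one {k G : Type u} [Field k] [Monoid G] (V : FDRep k G)
    {g : G} {c : k} (h : V.ρ g = c • 1) : V.character g = c * V.character 1 := by
  rw [character, character, h, map_one, map_smul, smul_eq_mul]

theorem exists_simple_with_centralCharacter {k G : Type u} [Field k] [Group G] [Finite G]
    (ω : Subgroup.center G →* kˣ) :
    ∃ V : FDRep k G, Simple V ∧ ∀ z : Subgroup.center G, V.ρ z = (ω z : k) • 1 := by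
  obtain ⟨σ, hσ, hσω⟩ := (eq_bot_or_exists_atom_le
    ((Representation.ofMulAction k G G).centralIsotypicComponent ω)).resolve_left
    (Representation.centralIsotypicComponent_ofMulAction_ne_bot ω)
  have := Subrepresentation.isIrreducible_toRepresentation hσ
  exact ⟨_, simple_of_isIrreducible σ.toRepresentation, fun z => LinearMap.ext fun v =>
    Subtype.ext <| Representation.mem_centralIsotypicComponent_iff.mp (hσω v.2) z⟩

end FDRep

/-- Every one-dimensional unitary character of the center `Z(G)` of a finite group `G`
arises as the central character of some irreducible complex character of `G`.  This is
the surjectivity part of the isomorphism between the chain group `𝓒(G)` and the dual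
of the center. -/
theorem central_character_surjective (G : Type) [Group G] [Fintype G]
    (ω : Subgroup.center G →* ℂˣ) :
    ∃ χ : G → ℂ, IsIrrChar G χ ∧
      ∀ z : Subgroup.center G, χ (z : G) = (ω z : ℂ) * χ 1 := by
  obtain ⟨V, hV, hω⟩ := FDRep.exists_simple_with_centralCharacter ω
  exact ⟨V.character, ⟨V, hV, rfl⟩, fun z => V.character_eq_mul_character_one (hω z)⟩
end
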